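/- (Lower bound via double summation form.) For every f ∈ F_{II} (i.e., f_0 = 0, f > 0 on T\{0}) and every g with g_0 = 0 and μ(g²) = 1, one has 1 ≤ D(g) · sup_{j∈T\{0}} II_j(f), where II_j(f) = (1/f_j) Σ_{k∈P(j)} (1/(μ_k q_{kk*})) Σ_{i∈T_k} μ_i f_i. Consequently λ_0 ≥ sup_{f∈F_{II}} inf_{i∈T\{0}} II_i(f)^{-1}. -/

import Mathlib

/-!
Write `g_j = Σ_{k ∈ P(j)} (g_k - g_{k*})` and apply Cauchy–Schwarz with the weights
`a_k = S_k / (μ_k q_{kk*})`, where `S_k = Σ_{i ∈ T_k} μ_i f_i`; since `Σ_{k ∈ P(j)} a_k = II_j(f) f_j`,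
this gives `g_j² ≤ II_j(f) f_j Σ_{k ∈ P(j)} μ_k q_{kk*} (g_k - g_{k*})² / S_k`. Multiplying by `μ_j`,
summing over `j` and exchanging the sums (`k ∈ P(j)` iff `j ∈ T_k`), the factor `Σ_{j ∈ T_k} μ_j f_j`
cancels `S_k`, leaving `μ(g²) ≤ sup II(f) · D(g)`.
-/

open Finset
open scoped Classical

structure BDTree (V : Type*) [Fintype V] where
  root : V
  parent : V → V
  layer : V → ℕ
  q : V → V → ℝ
  parent_root : parent root = root
  layer_root : layer root = 0
  layer_parent : ∀ i, i ≠ root → layer i = layer (parent i) + 1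
  reach : ∀ i, ∃ n, parent^[n] i = root
  q_pos_up : ∀ i, i ≠ root → 0 < q i (parent i)
  q_pos_down : ∀ i, i ≠ root → 0 < q (parent i) i

namespace BDTree

variable {V : Type*} [Fintype V] (T : BDTree V)

/-- The set of sons of a vertex. -/
noncomputable def sons (i : V) : Finset V :=
  Finset.univ.filter fun j => j ≠ T.root ∧ T.parent j = i

/-- The subtree `T_k` rooted at `k` (including `k`). -/
noncomputable def subtree (k : V) : Finset V :=
  Finset.univ.filter fun j => ∃ n, T.parent^[n] j = k

/-- The path set `P(i)`: vertices (excluding the root) on the path from `i` to the root. -/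
noncomputable def pathSet (i : V) : Finset V :=
  Finset.univ.filter fun k => k ≠ T.root ∧ ∃ n, T.parent^[n] i = k

/-- The symmetric measure `μ`. -/
noncomputable def mu (k : V) : ℝ :=
  ∏ j ∈ T.pathSet k, T.q (T.parent j) j / T.q j (T.parent j)

/-- The operator `Ω`. -/
noncomputable def Omega (g : V → ℝ) (i : V) : ℝ :=
  (∑ j ∈ T.sons i, T.q i j * (g j - g i)) + T.q i (T.parent i) * (g (T.parent i) - g i)

/-- The set of non-root vertices `T \ {0}`. -/
noncomputable def nonroot : Finset V := Finset.univ.filter fun i => i ≠ T.root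

/-- The Dirichlet form `D(f)`. -/
noncomputable def D (f : V → ℝ) : ℝ :=
  ∑ i ∈ T.nonroot, T.mu i * T.q i (T.parent i) * (f i - f (T.parent i)) ^ 2

/-- `μ(f²)`. -/
noncomputable def norm2 (f : V → ℝ) : ℝ := ∑ i ∈ T.nonroot, T.mu i * f i ^ 2

/-- The principal Dirichlet eigenvalue `λ₀`, via the classical variational formula. -/
noncomputable def lam0 : ℝ := sInf {r | ∃ f : V → ℝ, f T.root = 0 ∧ T.norm2 f = 1 ∧ r = T.D f}

/-- The single-summation operator `I`. -/
noncomputable def opI (f : V → ℝ) (i : V) : ℝ :=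
  (∑ j ∈ T.subtree i, T.mu j * f j) /
    (T.mu i * T.q i (T.parent i) * (f i - f (T.parent i)))

/-- The double-summation operator `II`. -/
noncomputable def opII (f : V → ℝ) (i : V) : ℝ :=
  (∑ k ∈ T.pathSet i, (1 / (T.mu k * T.q k (T.parent k))) *
      ∑ j ∈ T.subtree k, T.mu j * f j) / f i

/-- The difference-form operator `R`; at a son of the root the convention `w_0 = ∞`,
`1/∞ = 0` is used, i.e. the term `w i⁻¹` is replaced by `0`. -/
noncomputable def R (w : V → ℝ) (i : V) : ℝ :=
  T.q i (T.parent i) * (1 - (if T.parent i = T.root then 0 else (w i)⁻¹)) +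
    ∑ j ∈ T.sons i, T.q i j * (1 - w j)

/-- Membership in the test-function class `W = {w : w > 1, w_0 = ∞}` (the value at a son
of the root plays the role of `∞` and is not used by `R`). -/
def memW (w : V → ℝ) : Prop := ∀ i, i ≠ T.root → T.parent i ≠ T.root → 1 < w i

/-- `φ_j = Σ_{k∈P(j)} 1/(μ_k q_{kk*})`. -/
noncomputable def phi (j : V) : ℝ :=
  ∑ k ∈ T.pathSet j, 1 / (T.mu k * T.q k (T.parent k))

lemma mem_nonroot {i : V} : i ∈ T.nonroot ↔ i ≠ T.root := by
  simp [nonroot]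

lemma mem_pathSet {i k : V} : k ∈ T.pathSet i ↔ k ≠ T.root ∧ ∃ n, T.parent^[n] i = k := by
  simp [pathSet]

lemma mem_subtree {j k : V} : j ∈ T.subtree k ↔ ∃ n, T.parent^[n] j = k := by
  simp [subtree]

lemma iterate_parent_root (n : ℕ) : T.parent^[n] T.root = T.root :=
  Function.iterate_fixed T.parent_root n

lemma mem_pathSet_self {j : V} (hj : j ≠ T.root) : j ∈ T.pathSet j :=
  T.mem_pathSet.2 ⟨hj, 0, rfl⟩

lemma mem_subtree_self (k : V) : k ∈ T.subtree k :=
  T.mem_subtree.2 ⟨0, rfl⟩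

lemma ne_root_of_mem_subtree {j k : V} (hk : k ≠ T.root) (hj : j ∈ T.subtree k) : j ≠ T.root := by
  rintro rfl
  obtain ⟨n, hn⟩ := T.mem_subtree.1 hj
  exact hk (hn.symm.trans (T.iterate_parent_root n))

lemma eq_root_of_layer_eq_zero {j : V} (h : T.layer j = 0) : j = T.root := by
  by_contra hj
  rw [T.layer_parent j hj] at h
  omega

lemma layer_iterate_parent_le (n : ℕ) (j : V) : T.layer (T.parent^[n] j) ≤ T.layer j := by
  induction n generalizing j with
  | zero => rfl
  | succ n ih =>
    rw [Function.iterate_succ_apply]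
    refine (ih _).trans ?_
    by_cases hj : j = T.root
    · rw [hj, T.parent_root]
    · rw [T.layer_parent j hj]
      omega

lemma notMem_pathSet_parent {j : V} (hj : j ≠ T.root) : j ∉ T.pathSet (T.parent j) := by
  rintro hmem
  obtain ⟨-, n, hn⟩ := T.mem_pathSet.1 hmem
  have h := T.layer_iterate_parent_le n (T.parent j)
  rw [hn, T.layer_parent j hj] at h
  omega

lemma pathSet_eq_insert_pathSet_parent {j : V} (hj : j ≠ T.root) :
    T.pathSet j = insert j (T.pathSet (T.parent j)) := by
  ext k
  simp only [mem_pathSet, mem_insert]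
  constructor
  · rintro ⟨hk, _ | n, hn⟩
    · exact Or.inl hn.symm
    · exact Or.inr ⟨hk, n, hn⟩
  · rintro (rfl | ⟨hk, n, hn⟩)
    · exact ⟨hj, 0, rfl⟩
    · exact ⟨hk, n + 1, hn⟩

lemma sum_pathSet_sub_parent {g : V → ℝ} (hg0 : g T.root = 0) (j : V) :
    ∑ k ∈ T.pathSet j, (g k - g (T.parent k)) = g j := by
  induction hL : T.layer j generalizing j with
  | zero =>
    obtain rfl := T.eq_root_of_layer_eq_zero hL
    rw [hg0, sum_eq_zero]
    intro k hk
    obtain ⟨hk, n, rfl⟩ := T.mem_pathSet.1 hk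
    exact absurd (T.iterate_parent_root n) hk
  | succ n ih =>
    have hj : j ≠ T.root := fun h => by simp [h, T.layer_root] at hL
    rw [T.pathSet_eq_insert_pathSet_parent hj, sum_insert (T.notMem_pathSet_parent hj),
      ih (T.parent j) (by rw [T.layer_parent j hj] at hL; omega)]
    ring

lemma sum_nonroot_pathSet_comm (h : V → V → ℝ) :
    ∑ j ∈ T.nonroot, ∑ k ∈ T.pathSet j, h j k = ∑ k ∈ T.nonroot, ∑ j ∈ T.subtree k, h j k := by
  refine sum_comm' fun j k => ?_
  simp only [mem_nonroot, mem_pathSet, mem_subtree]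
  constructor
  · rintro ⟨-, hk, hjk⟩
    exact ⟨hjk, hk⟩
  · rintro ⟨⟨n, rfl⟩, hk⟩
    exact ⟨fun hj => hk (hj ▸ T.iterate_parent_root n), hk, n, rfl⟩

lemma mu_pos (k : V) : 0 < T.mu k := by
  refine prod_pos fun j hj => ?_
  have hj := (T.mem_pathSet.1 hj).1
  exact div_pos (T.q_pos_down j hj) (T.q_pos_up j hj)

lemma mu_mul_q_parent_pos {k : V} (hk : k ≠ T.root) : 0 < T.mu k * T.q k (T.parent k) :=
  mul_pos (T.mu_pos k) (T.q_pos_up k hk)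

noncomputable def subtreeMass (f : V → ℝ) (k : V) : ℝ :=
  ∑ j ∈ T.subtree k, T.mu j * f j

variable {T}

section PositiveTestFunction

variable {f : V → ℝ} (hfpos : ∀ i, i ≠ T.root → 0 < f i)
include hfpos

lemma subtreeMass_pos {k : V} (hk : k ≠ T.root) : 0 < T.subtreeMass f k :=
  sum_pos (fun j hj => mul_pos (T.mu_pos j) (hfpos j (T.ne_root_of_mem_subtree hk hj)))
    ⟨k, T.mem_subtree_self k⟩

lemma opII_mul_self {j : V} (hj : j ≠ T.root) :
    T.opII f j * f j =
      ∑ k ∈ T.pathSet j, T.subtreeMass f k / (T.mu k * T.q k (T.parent k)) := by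
  rw [opII, div_mul_cancel₀ _ (hfpos j hj).ne']
  exact sum_congr rfl fun k _ => one_div_mul_eq_div _ _

lemma opII_pos {j : V} (hj : j ≠ T.root) : 0 < T.opII f j := by
  refine pos_of_mul_pos_left ?_ (hfpos j hj).le
  rw [opII_mul_self hfpos hj]
  refine sum_pos (fun k hk => ?_) ⟨j, T.mem_pathSet_self hj⟩
  have hk := (T.mem_pathSet.1 hk).1
  exact div_pos (subtreeMass_pos hfpos hk) (T.mu_mul_q_parent_pos hk)

lemma sq_le_opII_mul {g : V → ℝ} (hg0 : g T.root = 0) {j : V} (hj : j ≠ T.root) :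
    g j ^ 2 ≤ T.opII f j * f j * ∑ k ∈ T.pathSet j,
      T.mu k * T.q k (T.parent k) * (g k - g (T.parent k)) ^ 2 / T.subtreeMass f k := by
  have hweight : ∀ k ∈ T.pathSet j, 0 < T.subtreeMass f k / (T.mu k * T.q k (T.parent k)) :=
    fun k hk => div_pos (subtreeMass_pos hfpos (T.mem_pathSet.1 hk).1)
      (T.mu_mul_q_parent_pos (T.mem_pathSet.1 hk).1)
  have hcs := sq_sum_div_le_sum_sq_div (T.pathSet j) (fun k => g k - g (T.parent k)) hweight
  rw [T.sum_pathSet_sub_parent hg0, ← opII_mul_self hfpos hj,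
    div_le_iff₀' (mul_pos (opII_pos hfpos hj) (hfpos j hj))] at hcs
  refine hcs.trans_eq (congrArg _ (sum_congr rfl fun k _ => ?_))
  rw [div_div_eq_mul_div, mul_comm]

theorem norm2_le_mul_D {g : V → ℝ} (hg0 : g T.root = 0) {M : ℝ}
    (hM : ∀ j ∈ T.nonroot, T.opII f j ≤ M) : T.norm2 g ≤ M * T.D g := by
  set c : V → ℝ := fun k =>
    T.mu k * T.q k (T.parent k) * (g k - g (T.parent k)) ^ 2 / T.subtreeMass f k
  have hc : ∀ k ∈ T.nonroot, 0 ≤ c k := fun k hk =>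
    div_nonneg (mul_nonneg (T.mu_mul_q_parent_pos (T.mem_nonroot.1 hk)).le (sq_nonneg _))
      (subtreeMass_pos hfpos (T.mem_nonroot.1 hk)).le
  calc T.norm2 g = ∑ j ∈ T.nonroot, T.mu j * g j ^ 2 := rfl
    _ ≤ ∑ j ∈ T.nonroot, T.mu j * (M * f j * ∑ k ∈ T.pathSet j, c k) := by
      refine sum_le_sum fun j hj => mul_le_mul_of_nonneg_left ?_ (T.mu_pos j).le
      have hj := T.mem_nonroot.1 hj
      refine (sq_le_opII_mul hfpos hg0 hj).trans (mul_le_mul_of_nonneg_right ?_ ?_)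
      · exact mul_le_mul_of_nonneg_right (hM j (T.mem_nonroot.2 hj)) (hfpos j hj).le
      · exact sum_nonneg fun k hk => hc k (T.mem_nonroot.2 (T.mem_pathSet.1 hk).1)
    _ = M * ∑ k ∈ T.nonroot, ∑ j ∈ T.subtree k, T.mu j * f j * c k := by
      rw [← T.sum_nonroot_pathSet_comm, mul_sum]
      refine sum_congr rfl fun j _ => ?_
      rw [mul_sum, mul_sum, mul_sum]
      exact sum_congr rfl fun k _ => by ring
    _ = M * T.D g := by
      rw [D]
      congr 1
      refine sum_congr rfl fun k hk => ?_
      rw [← sum_mul, ← subtreeMass, mul_div_cancel₀ _ (subtreeMass_pos hfpos (T.mem_nonroot.1 hk)).ne']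

end PositiveTestFunction

lemma le_lam0 (hne : T.nonroot.Nonempty) {c : ℝ}
    (h : ∀ g : V → ℝ, g T.root = 0 → T.norm2 g = 1 → c ≤ T.D g) : c ≤ T.lam0 := by
  refine le_csInf ?_ fun r ⟨g, hg0, hgn, hr⟩ => hr ▸ h g hg0 hgn
  obtain ⟨i, hi⟩ := hne
  let g : V → ℝ := fun v => if v = i then (Real.sqrt (T.mu i))⁻¹ else 0
  refine ⟨T.D g, g, if_neg (T.mem_nonroot.1 hi).symm, ?_, rfl⟩
  rw [norm2, sum_eq_single_of_mem i hi fun j _ hji => by simp [g, hji]]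
  simp only [g, if_pos rfl]
  rw [inv_pow, Real.sq_sqrt (T.mu_pos i).le, mul_inv_cancel₀ (T.mu_pos i).ne']

end BDTree

theorem stmt4_general {V : Type*} [Fintype V] (T : BDTree V) (hne : T.nonroot.Nonempty)
    (f g : V → ℝ) (hfpos : ∀ i, i ≠ T.root → 0 < f i)
    (hg0 : g T.root = 0) (hgn : T.norm2 g = 1) :
    1 ≤ T.D g * (T.nonroot.sup' hne fun j => T.opII f j) ∧
      T.nonroot.inf' hne (fun i => (T.opII f i)⁻¹) ≤ T.lam0 := by
  set M := T.nonroot.sup' hne fun j => T.opII f j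
  have hM : ∀ j ∈ T.nonroot, T.opII f j ≤ M := fun j hj => le_sup' _ hj
  have hbound : ∀ g : V → ℝ, g T.root = 0 → T.norm2 g = 1 → 1 ≤ T.D g * M := fun g hg0 hgn => by
    rw [← hgn, mul_comm]
    exact BDTree.norm2_le_mul_D hfpos hg0 hM
  obtain ⟨j, hj, hjM⟩ : ∃ j ∈ T.nonroot, M = T.opII f j := exists_mem_eq_sup' hne _
  have hMpos : 0 < M := by
    rw [hjM]
    exact BDTree.opII_pos hfpos (T.mem_nonroot.1 hj)
  refine ⟨hbound g hg0 hgn, (inf'_le _ hj).trans ?_⟩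
  rw [← hjM]
  exact T.le_lam0 hne fun g hg0 hgn => (inv_le_iff_one_le_mul₀ hMpos).2 (hbound g hg0 hgn)

/-- lower bound via the double summation form. -/
theorem stmt4 {V : Type*} [Fintype V] (T : BDTree V) (hne : T.nonroot.Nonempty)
    (f g : V → ℝ) (hf0 : f T.root = 0) (hfpos : ∀ i, i ≠ T.root → 0 < f i)
    (hg0 : g T.root = 0) (hgn : T.norm2 g = 1) :
    1 ≤ T.D g * (T.nonroot.sup' hne fun j => T.opII f j) ∧
      T.nonroot.inf' hne (fun i => (T.opII f i)⁻¹) ≤ T.lam0 :=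
  stmt4_general T hne f g hfpos hg0 hgn
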